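/- (Forward KL smoothness) Assume |A| ≥ 3. For any probability distribution ρ on S and any θ, θ' ∈ ℝ^{S×A}, the forward-KL-regularized value function satisfies | Ṽ_λ^{π_{θ'}}(ρ) − Ṽ_λ^{π_θ}(ρ) − ⟨∇_θ Ṽ_λ^{π_θ}(ρ), θ' − θ⟩ | ≤ (L_F(θ,θ')/2) ‖θ' − θ‖₂² with L_F(θ,θ') := 8 ( r_max + λ max{ max_{s,a}|log π_θ(a|s)|, max_{s,a}|log π_{θ'}(a|s)| } ) / (1−γ)³. -/

import Mathlib

open Finset
open scoped RealInnerProductSpace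

/-- The softmax policy `π_θ(a|s) = exp(θ_{sa})/∑_{a'} exp(θ_{sa'})`. -/
noncomputable def softmaxPolicy {S A : Type*} [Fintype A]
    (θ : S × A → ℝ) (s : S) (a : A) : ℝ :=
  Real.exp (θ (s, a)) / ∑ a' : A, Real.exp (θ (s, a'))

/-- The `f`-divergence `D_f(p,q) := ∑_a q(a) f(p(a)/q(a))` of two probability vectors. -/
noncomputable def fDiv {A : Type*} [Fintype A] (f : ℝ → ℝ) (p q : A → ℝ) : ℝ :=
  ∑ a : A, q a * f (p a / q a)

def IsPolicy {S A : Type*} [Fintype A] (π : S → A → ℝ) : Prop :=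
  (∀ s a, 0 < π s a) ∧ ∀ s, ∑ a : A, π s a = 1

/-- `V` satisfies the Bellman equation of the `f`-divergence regularized value function
`Ṽ_λ^π`. -/
def IsRegValue {S A : Type*} [Fintype S] [Fintype A]
    (P : S → A → S → ℝ) (r : S → A → ℝ) (γ lam : ℝ) (f : ℝ → ℝ)
    (πref π : S → A → ℝ) (V : S → ℝ) : Prop :=
  ∀ s, V s = (∑ a : A, π s a * (r s a + γ * ∑ s' : S, P s a s' * V s')) -
      lam * fDiv f (π s) (πref s)

/-!
Along the segment `θ_t = θ + t (θ' - θ)` the value `v_t` solves the Bellman equation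
`v_t = c_t + γ P_{π_t} v_t`, so the maximum principle for discounted averages gives
`|v_t| ≤ (r_max + λ m) / (1 - γ)` as soon as `|log π_t| ≤ m`; since `t ↦ log π_t(a|s)` is
concave, the bound `m` at the two endpoints suffices. Differentiating the Bellman equation once
and twice in `t` gives equations of the same shape for `v̇_t` and `v̈_t`, whose source terms are
controlled by the softmax identities `∂_t π_t = π_t (d - E_{π_t} d)` and
`∂_t E_{π_t} d = Var_{π_t} d`. This bounds `|v̈_t|` by `L_F ‖θ' - θ‖²`, and Taylor's formula
along the segment gives the claim. The assumption `|A| ≥ 3` forces `m ≥ log 3 ≥ 1`, which absorbs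
the bare `λ` terms into the constant.
-/

open scoped Matrix ContDiff

section WeightedSum

variable {ι : Type*} [Fintype ι]

lemma abs_sum_mul_le_of_abs_le {w f : ι → ℝ} {B : ℝ} (hf : ∀ i, |f i| ≤ B) :
    |∑ i, w i * f i| ≤ (∑ i, |w i|) * B := by
  rw [sum_mul]
  refine (abs_sum_le_sum_abs _ _).trans (sum_le_sum fun i _ => ?_)
  rw [abs_mul]
  exact mul_le_mul_of_nonneg_left (hf i) (abs_nonneg _)

lemma sum_abs_eq_one_of_mem_stdSimplex {w : ι → ℝ} (hw : w ∈ stdSimplex ℝ ι) :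
    ∑ i, |w i| = 1 := by
  simpa only [abs_of_nonneg (hw.1 _)] using hw.2

lemma sum_abs_mul_le_of_mem_stdSimplex {w f : ι → ℝ} {B : ℝ} (hw : w ∈ stdSimplex ℝ ι)
    (hf : ∀ i, |f i| ≤ B) : ∑ i, |w i * f i| ≤ B := by
  calc ∑ i, |w i * f i| ≤ ∑ i, w i * B := sum_le_sum fun i _ => by
        rw [abs_mul, abs_of_nonneg (hw.1 i)]
        exact mul_le_mul_of_nonneg_left (hf i) (hw.1 i)
    _ = B := by rw [← sum_mul, hw.2, one_mul]

lemma abs_sum_mul_le_of_mem_stdSimplex {w f : ι → ℝ} {B : ℝ} (hw : w ∈ stdSimplex ℝ ι)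
    (hf : ∀ i, |f i| ≤ B) : |∑ i, w i * f i| ≤ B :=
  (abs_sum_le_sum_abs _ _).trans (sum_abs_mul_le_of_mem_stdSimplex hw hf)

lemma sum_mul_sq_sub_mean {w f : ι → ℝ} (hw : ∑ i, w i = 1) :
    ∑ i, w i * (f i - ∑ j, w j * f j) ^ 2 = ∑ i, w i * f i ^ 2 - (∑ j, w j * f j) ^ 2 := by
  set m := ∑ j, w j * f j
  have : ∀ i, w i * (f i - m) ^ 2 = w i * f i ^ 2 - 2 * m * (w i * f i) + m ^ 2 * w i :=
    fun i => by ring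
  simp only [this, sum_add_distrib, sum_sub_distrib, ← mul_sum, hw]
  ring

end WeightedSum

section Bellman

variable {S A : Type*} [Fintype S] [Fintype A]

def expectNext (P : S → A → S → ℝ) (π : S → A → ℝ) (x : S → ℝ) (s : S) : ℝ :=
  ∑ a, π s a * ∑ s', P s a s' * x s'

lemma abs_expectNext_le {P : S → A → S → ℝ} (hP : ∀ s a, P s a ∈ stdSimplex ℝ S)
    (π : S → A → ℝ) {x : S → ℝ} {B : ℝ} (hx : ∀ s, |x s| ≤ B) (s : S) :
    |expectNext P π x s| ≤ (∑ a, |π s a|) * B :=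
  abs_sum_mul_le_of_abs_le fun a => abs_sum_mul_le_of_mem_stdSimplex (hP s a) hx

lemma abs_le_of_eq_mul_expectNext_add {P : S → A → S → ℝ} (hP : ∀ s a, P s a ∈ stdSimplex ℝ S)
    {π : S → A → ℝ} (hπ : ∀ s, π s ∈ stdSimplex ℝ A) {γ : ℝ} (hγ0 : 0 ≤ γ) (hγ1 : γ < 1)
    {x e : S → ℝ} (hx : ∀ s, x s = γ * expectNext P π x s + e s) {E : ℝ}
    (he : ∀ s, |e s| ≤ E) (s : S) : |x s| ≤ E / (1 - γ) := by
  have : Nonempty S := ⟨s⟩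
  obtain ⟨s₀, hs₀⟩ := Finite.exists_max fun s => |x s|
  have hnext : |expectNext P π x s₀| ≤ |x s₀| := by
    simpa [sum_abs_eq_one_of_mem_stdSimplex (hπ s₀)] using abs_expectNext_le hP π hs₀ s₀
  have hmax : |x s₀| ≤ γ * |x s₀| + E := by
    calc |x s₀| ≤ γ * |expectNext P π x s₀| + |e s₀| := by
          rw [hx s₀]
          simpa [abs_mul, abs_of_nonneg hγ0] using abs_add_le (γ * expectNext P π x s₀) (e s₀)
      _ ≤ γ * |x s₀| + E := by gcongr; exact he s₀
  rw [le_div_iff₀ (by linarith)]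
  nlinarith [hs₀ s]

def transitionMatrix (P : S → A → S → ℝ) (π : S → A → ℝ) : Matrix S S ℝ :=
  Matrix.of fun s s' => ∑ a, π s a * P s a s'

lemma transitionMatrix_mulVec (P : S → A → S → ℝ) (π : S → A → ℝ) (x : S → ℝ) :
    transitionMatrix P π *ᵥ x = expectNext P π x := by
  ext s
  simp only [Matrix.mulVec, dotProduct, transitionMatrix, Matrix.of_apply, expectNext, sum_mul,
    mul_sum, mul_assoc]
  exact sum_comm

lemma isUnit_det_one_sub_smul_transitionMatrix [DecidableEq S] {P : S → A → S → ℝ}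
    (hP : ∀ s a, P s a ∈ stdSimplex ℝ S) {π : S → A → ℝ} (hπ : ∀ s, π s ∈ stdSimplex ℝ A)
    {γ : ℝ} (hγ0 : 0 ≤ γ) (hγ1 : γ < 1) : IsUnit (1 - γ • transitionMatrix P π).det := by
  rw [isUnit_iff_ne_zero, Ne, ← Matrix.exists_mulVec_eq_zero_iff]
  rintro ⟨v, hv0, hv⟩
  refine hv0 (funext fun s => abs_nonpos_iff.mp ?_)
  have hfix : ∀ s, v s = γ * expectNext P π v s + 0 := fun s => by
    have := congrFun hv s
    simp only [Matrix.sub_mulVec, Matrix.one_mulVec, Matrix.smul_mulVec,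
      transitionMatrix_mulVec] at this
    simpa [sub_eq_zero] using this
  simpa using abs_le_of_eq_mul_expectNext_add hP hπ hγ0 hγ1 hfix (fun _ => abs_zero.le) s

noncomputable def regReward (r : S → A → ℝ) (lam : ℝ) (f : ℝ → ℝ) (πref π : S → A → ℝ)
    (s : S) : ℝ :=
  ∑ a, π s a * r s a - lam * fDiv f (π s) (πref s)

lemma isRegValue_iff {P : S → A → S → ℝ} {r : S → A → ℝ} {γ lam : ℝ} {f : ℝ → ℝ}
    {πref π : S → A → ℝ} {V : S → ℝ} :
    IsRegValue P r γ lam f πref π V ↔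
      ∀ s, V s = γ * expectNext P π V s + regReward r lam f πref π s := by
  unfold IsRegValue
  refine forall_congr' fun s => ?_
  have : ∑ a, π s a * (r s a + γ * ∑ s', P s a s' * V s') =
      γ * expectNext P π V s + ∑ a, π s a * r s a := by
    rw [expectNext, mul_sum, ← sum_add_distrib]
    exact sum_congr rfl fun a _ => by ring
  rw [this, regReward, add_sub_assoc]

lemma IsRegValue.eq_inv_mulVec [DecidableEq S] {P : S → A → S → ℝ} {r : S → A → ℝ}
    {γ lam : ℝ} {f : ℝ → ℝ} {πref π : S → A → ℝ} {V : S → ℝ}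
    (hV : IsRegValue P r γ lam f πref π V) (hP : ∀ s a, P s a ∈ stdSimplex ℝ S)
    (hπ : ∀ s, π s ∈ stdSimplex ℝ A) (hγ0 : 0 ≤ γ) (hγ1 : γ < 1) :
    V = (1 - γ • transitionMatrix P π)⁻¹ *ᵥ regReward r lam f πref π := by
  have hlin : (1 - γ • transitionMatrix P π) *ᵥ V = regReward r lam f πref π := by
    ext s
    simp only [Matrix.sub_mulVec, Matrix.one_mulVec, Matrix.smul_mulVec, transitionMatrix_mulVec,
      Pi.sub_apply, Pi.smul_apply, smul_eq_mul]
    linarith [isRegValue_iff.mp hV s]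
  rw [← hlin, Matrix.mulVec_mulVec,
    Matrix.nonsing_inv_mul _ (isUnit_det_one_sub_smul_transitionMatrix hP hπ hγ0 hγ1),
    Matrix.one_mulVec]

lemma hasDerivAt_expectNext {P : S → A → S → ℝ} {t : ℝ} {w : ℝ → S → A → ℝ} {w' : S → A → ℝ}
    {y : ℝ → S → ℝ} {y' : S → ℝ}
    (hw : ∀ s a, HasDerivAt (fun u => w u s a) (w' s a) t)
    (hy : ∀ s, HasDerivAt (fun u => y u s) (y' s) t) (s : S) :
    HasDerivAt (fun u => expectNext P (w u) (y u) s)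
      (expectNext P w' (y t) s + expectNext P (w t) y' s) t := by
  refine (HasDerivAt.fun_sum fun a _ => (hw s a).mul
    (HasDerivAt.fun_sum fun s' _ => (hy s').const_mul (P s a s'))).congr_deriv ?_
  simp only [expectNext, sum_add_distrib]

lemma eq_mul_expectNext_add_of_hasDerivAt {P : S → A → S → ℝ} {t γ : ℝ} {x : ℝ → S → ℝ}
    {w : ℝ → S → A → ℝ} {e : ℝ → S → ℝ} {x' e' : S → ℝ} {w' : S → A → ℝ}
    (h : ∀ u s, x u s = γ * expectNext P (w u) (x u) s + e u s)
    (hx : ∀ s, HasDerivAt (fun u => x u s) (x' s) t)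
    (hw : ∀ s a, HasDerivAt (fun u => w u s a) (w' s a) t)
    (he : ∀ s, HasDerivAt (fun u => e u s) (e' s) t) (s : S) :
    x' s = γ * expectNext P (w t) x' s + (γ * expectNext P w' (x t) s + e' s) := by
  have hxs := hx s
  rw [show (fun u => x u s) = _ from funext fun u => h u s] at hxs
  have := hxs.unique (((hasDerivAt_expectNext hw hx s).const_mul γ).fun_add (he s))
  linarith

end Bellman

section RegReward

variable {S A : Type*} [Fintype A] {r : S → A → ℝ} {lam : ℝ} {πref : S → A → ℝ}

lemma IsPolicy.mem_stdSimplex {π : S → A → ℝ} (hπ : IsPolicy π) (s : S) :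
    π s ∈ stdSimplex ℝ A :=
  ⟨fun a => (hπ.1 s a).le, hπ.2 s⟩

lemma fDiv_neg_log_eq {p q : A → ℝ} (hp : ∀ a, 0 < p a) (hq : ∀ a, 0 < q a) :
    fDiv (fun x => -Real.log x) p q = ∑ a, q a * (Real.log (q a) - Real.log (p a)) :=
  sum_congr rfl fun a _ => by dsimp only; rw [Real.log_div (hp a).ne' (hq a).ne']; ring

lemma fDiv_neg_log_nonneg {p q : A → ℝ} (hp : ∀ a, 0 < p a) (hq : ∀ a, 0 < q a)
    (hpq : ∑ a, p a = ∑ a, q a) : 0 ≤ fDiv (fun x => -Real.log x) p q := by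
  have hterm : ∀ a, q a - p a ≤ q a * -Real.log (p a / q a) := fun a => by
    have := Real.log_le_sub_one_of_pos (div_pos (hp a) (hq a))
    have := mul_le_mul_of_nonneg_left this (hq a).le
    rw [mul_sub, mul_div_cancel₀ _ (hq a).ne', mul_one] at this
    linarith
  calc (0 : ℝ) = ∑ a, (q a - p a) := by rw [sum_sub_distrib, hpq, sub_self]
    _ ≤ _ := sum_le_sum fun a _ => hterm a

lemma fDiv_neg_log_le {p q : A → ℝ} (hp : ∀ a, 0 < p a) (hq : ∀ a, 0 < q a)
    (hq1 : ∑ a, q a = 1) {m : ℝ} (hm : ∀ a, |Real.log (p a)| ≤ m) :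
    fDiv (fun x => -Real.log x) p q ≤ m := by
  have hterm : ∀ a, Real.log (q a) - Real.log (p a) ≤ m := fun a => by
    have hq_le : q a ≤ 1 := hq1 ▸ single_le_sum (fun b _ => (hq b).le) (mem_univ a)
    linarith [Real.log_nonpos (hq a).le hq_le, neg_le_abs (Real.log (p a)), hm a]
  calc fDiv (fun x => -Real.log x) p q ≤ ∑ a, q a * m := by
        rw [fDiv_neg_log_eq hp hq]
        exact sum_le_sum fun a _ => mul_le_mul_of_nonneg_left (hterm a) (hq a).le
    _ = m := by rw [← sum_mul, hq1, one_mul]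

lemma abs_regReward_le {rmax : ℝ} (hr : ∀ s a, |r s a| ≤ rmax) (hlam : 0 ≤ lam)
    (hπref : IsPolicy πref) {π : S → A → ℝ} (hπ : IsPolicy π) {m : ℝ}
    (hm : ∀ s a, |Real.log (π s a)| ≤ m) (s : S) :
    |regReward r lam (fun x => -Real.log x) πref π s| ≤ rmax + lam * m := by
  have hR := abs_sum_mul_le_of_mem_stdSimplex (hπ.mem_stdSimplex s) (hr s)
  have hK0 := fDiv_neg_log_nonneg (hπ.1 s) (hπref.1 s) (by rw [hπ.2, hπref.2])
  have hK := fDiv_neg_log_le (hπ.1 s) (hπref.1 s) (hπref.2 s) (hm s)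
  rw [regReward, abs_le] at *
  constructor <;> nlinarith

lemma IsRegValue.abs_le [Fintype S] {P : S → A → S → ℝ} (hP : ∀ s a, P s a ∈ stdSimplex ℝ S) {γ : ℝ}
    (hγ0 : 0 ≤ γ) (hγ1 : γ < 1) {rmax : ℝ} (hr : ∀ s a, |r s a| ≤ rmax) (hlam : 0 ≤ lam)
    (hπref : IsPolicy πref) {π : S → A → ℝ} (hπ : IsPolicy π) {m : ℝ}
    (hm : ∀ s a, |Real.log (π s a)| ≤ m) {V : S → ℝ}
    (hV : IsRegValue P r γ lam (fun x => -Real.log x) πref π V) (s : S) :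
    |V s| ≤ (rmax + lam * m) / (1 - γ) :=
  abs_le_of_eq_mul_expectNext_add hP hπ.mem_stdSimplex hγ0 hγ1 (isRegValue_iff.mp hV)
    (abs_regReward_le hr hlam hπref hπ hm) s

end RegReward

section Calculus

variable {𝕜 E ι : Type*} [NontriviallyNormedField 𝕜] [NormedAddCommGroup E] [NormedSpace 𝕜 E]
  [Fintype ι] [DecidableEq ι] {n : WithTop ℕ∞}

lemma contDiff_det {G : E → Matrix ι ι 𝕜} (hG : ∀ i j, ContDiff 𝕜 n fun x => G x i j) :
    ContDiff 𝕜 n fun x => (G x).det := by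
  simp only [Matrix.det_apply]
  exact ContDiff.sum fun σ _ => (contDiff_prod fun i _ => hG (σ i) i).const_smul _

lemma contDiff_inv_apply {G : E → Matrix ι ι 𝕜} (hG : ∀ i j, ContDiff 𝕜 n fun x => G x i j)
    (hdet : ∀ x, (G x).det ≠ 0) (i j : ι) : ContDiff 𝕜 n fun x => (G x)⁻¹ i j := by
  simp only [Matrix.inv_def, Ring.inverse_eq_inv', Matrix.smul_apply, smul_eq_mul,
    Matrix.adjugate_apply]
  refine ((contDiff_det hG).inv hdet).mul (contDiff_det fun k l => ?_)
  simp only [Matrix.updateRow_apply]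
  split_ifs
  exacts [contDiff_const, hG k l]

lemma abs_sub_sub_deriv_le_of_abs_deriv2_le {f f' f'' : ℝ → ℝ} {L : ℝ}
    (hf : ∀ t, HasDerivAt f (f' t) t) (hf' : ∀ t, HasDerivAt f' (f'' t) t)
    (hL : ∀ t ∈ Set.Icc (0 : ℝ) 1, |f'' t| ≤ L) : |f 1 - f 0 - f' 0| ≤ L / 2 := by
  have hf'_lip : ∀ t ∈ Set.Icc (0 : ℝ) 1, ‖f' t - f' 0‖ ≤ L * (t - 0) :=
    norm_image_sub_le_of_norm_deriv_le_segment' (fun t _ => (hf' t).hasDerivWithinAt)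
      fun t ht => hL t (Set.Ico_subset_Icc_self ht)
  have hg : ∀ t, HasDerivAt (fun t => f t - f 0 - t * f' 0) (f' t - f' 0) t := fun t =>
    ((hf t).sub_const (f 0)).fun_sub (hasDerivAt_mul_const (f' 0))
  have := image_norm_le_of_norm_deriv_right_le_deriv_boundary (a := 0) (b := 1)
    (f := fun t => f t - f 0 - t * f' 0) (f' := fun t => f' t - f' 0)
    (B := fun t => L * t ^ 2 / 2) (B' := fun t => L * t)
    (fun t _ => (hg t).continuousAt.continuousWithinAt) (fun t _ => (hg t).hasDerivWithinAt)
    (by simp)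
    (fun t => (((hasDerivAt_pow 2 t).const_mul L).div_const 2).congr_deriv (by ring))
    (fun t ht => by simpa using hf'_lip t (Set.Ico_subset_Icc_self ht))
    (Set.right_mem_Icc.2 zero_le_one)
  simpa using this

lemma inner_gradient_sum_mul_eq {F ι : Type*} [NormedAddCommGroup F] [InnerProductSpace ℝ F]
    [CompleteSpace F] [Fintype ι] {V : F → ι → ℝ} (hV : ∀ i, Differentiable ℝ fun x => V x i)
    (ρ : ι → ℝ) (θ d : F) :
    ⟪gradient (fun x => ∑ i, ρ i * V x i) θ, d⟫ =
      ∑ i, ρ i * deriv (fun t : ℝ => V (θ + t • d) i) 0 := by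
  have hline : ∀ i, HasDerivAt (fun t : ℝ => V (θ + t • d) i)
      (deriv (fun t : ℝ => V (θ + t • d) i) 0) 0 := fun i =>
    ((hV i).comp (differentiable_const θ |>.add (differentiable_id.smul_const d)) 0).hasDerivAt
  have hF : Differentiable ℝ fun x => ∑ i, ρ i * V x i := by fun_prop
  exact ((hF θ).hasGradientAt.hasFDerivAt.hasLineDerivAt d).unique
    (HasDerivAt.fun_sum fun i _ => (hline i).const_mul (ρ i))

end Calculus

section Softmax

variable {S A : Type*} [Fintype A] [Nonempty A]

lemma softmaxPolicy_pos (θ : S × A → ℝ) (s : S) (a : A) : 0 < softmaxPolicy θ s a :=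
  div_pos (Real.exp_pos _) (sum_pos (fun _ _ => Real.exp_pos _) univ_nonempty)

lemma softmaxPolicy_mem_stdSimplex (θ : S × A → ℝ) (s : S) : softmaxPolicy θ s ∈ stdSimplex ℝ A :=
  ⟨fun a => (softmaxPolicy_pos θ s a).le, by
    simp only [softmaxPolicy]
    rw [← sum_div, div_self (sum_pos (fun _ _ => Real.exp_pos _) univ_nonempty).ne']⟩

lemma softmaxPolicy_le_one (θ : S × A → ℝ) (s : S) (a : A) : softmaxPolicy θ s a ≤ 1 :=
  (softmaxPolicy_mem_stdSimplex θ s).2 ▸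
    single_le_sum (fun b _ => (softmaxPolicy_mem_stdSimplex θ s).1 b) (mem_univ a)

lemma contDiff_softmaxPolicy {E : Type*} [NormedAddCommGroup E] [NormedSpace ℝ E]
    {n : WithTop ℕ∞} {θ : E → S × A → ℝ} (hθ : ∀ q, ContDiff ℝ n fun x => θ x q) (s : S) (a : A) :
    ContDiff ℝ n fun x => softmaxPolicy (θ x) s a :=
  ((hθ (s, a)).exp).div (ContDiff.sum fun b _ => (hθ (s, b)).exp)
    fun _ => (sum_pos (fun _ _ => Real.exp_pos _) univ_nonempty).ne'

lemma isPolicy_softmaxPolicy (θ : S × A → ℝ) : IsPolicy (softmaxPolicy θ) :=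
  ⟨softmaxPolicy_pos θ, fun s => (softmaxPolicy_mem_stdSimplex θ s).2⟩

-- `softmaxPolicyDeriv θ d` and `softmaxPolicyDeriv2 θ d` are the first two derivatives of
-- `t ↦ softmaxPolicy (θ + t • d)` at `t = 0`, and `softmaxScore θ d` is the first derivative of
-- its logarithm.
noncomputable def softmaxScore (θ d : S × A → ℝ) (s : S) (a : A) : ℝ :=
  d (s, a) - ∑ b, softmaxPolicy θ s b * d (s, b)

noncomputable def softmaxVar (θ d : S × A → ℝ) (s : S) : ℝ :=
  ∑ a, softmaxPolicy θ s a * softmaxScore θ d s a ^ 2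

noncomputable def softmaxPolicyDeriv (θ d : S × A → ℝ) (s : S) (a : A) : ℝ :=
  softmaxPolicy θ s a * softmaxScore θ d s a

noncomputable def softmaxPolicyDeriv2 (θ d : S × A → ℝ) (s : S) (a : A) : ℝ :=
  softmaxPolicy θ s a * (softmaxScore θ d s a ^ 2 - softmaxVar θ d s)

variable (θ d : S × A → ℝ) (s : S)

lemma sum_softmaxPolicy_mul_softmaxScore : ∑ a, softmaxPolicy θ s a * softmaxScore θ d s a = 0 := by
  simp only [softmaxScore, mul_sub, sum_sub_distrib, ← sum_mul,
    (softmaxPolicy_mem_stdSimplex θ s).2, one_mul, sub_self]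

lemma hasDerivAt_log_softmaxPolicy_line (t : ℝ) (a : A) :
    HasDerivAt (fun u => Real.log (softmaxPolicy (θ + u • d) s a))
      (softmaxScore (θ + t • d) d s a) t := by
  have hZ : ∀ u, 0 < ∑ b, Real.exp (θ (s, b) + u * d (s, b)) :=
    fun u => sum_pos (fun _ _ => Real.exp_pos _) univ_nonempty
  have hlog : (fun u => Real.log (softmaxPolicy (θ + u • d) s a)) =
      fun u => θ (s, a) + u * d (s, a) - Real.log (∑ b, Real.exp (θ (s, b) + u * d (s, b))) := by
    ext u
    simp [softmaxPolicy, Real.log_div (Real.exp_pos _).ne' (hZ u).ne']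
  have hsum : HasDerivAt (fun u => ∑ b, Real.exp (θ (s, b) + u * d (s, b)))
      (∑ b, Real.exp (θ (s, b) + t * d (s, b)) * d (s, b)) t :=
    HasDerivAt.fun_sum fun b _ => ((hasDerivAt_mul_const (d (s, b))).const_add _).exp
  rw [hlog]
  refine (((hasDerivAt_mul_const (d (s, a))).const_add (θ (s, a))).sub
    (hsum.log (hZ t).ne')).congr_deriv ?_
  simp [softmaxScore, softmaxPolicy, sum_div, div_mul_eq_mul_div]

lemma hasDerivAt_softmaxPolicy_line (t : ℝ) (a : A) :
    HasDerivAt (fun u => softmaxPolicy (θ + u • d) s a)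
      (softmaxPolicyDeriv (θ + t • d) d s a) t := by
  simpa only [Real.exp_log (softmaxPolicy_pos _ s a), softmaxPolicyDeriv] using
    (hasDerivAt_log_softmaxPolicy_line θ d s t a).exp

lemma hasDerivAt_softmaxScore_line (t : ℝ) (a : A) :
    HasDerivAt (fun u => softmaxScore (θ + u • d) d s a) (-softmaxVar (θ + t • d) d s) t := by
  have hmean := HasDerivAt.fun_sum (u := univ) fun b _ =>
    (hasDerivAt_softmaxPolicy_line θ d s t b).mul_const (d (s, b))
  simp only [softmaxPolicyDeriv] at hmean
  refine (hmean.const_sub (d (s, a))).congr_deriv ?_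
  have hsplit : ∀ b, softmaxPolicy (θ + t • d) s b * softmaxScore (θ + t • d) d s b * d (s, b) =
      softmaxPolicy (θ + t • d) s b * softmaxScore (θ + t • d) d s b ^ 2 +
        (∑ c, softmaxPolicy (θ + t • d) s c * d (s, c)) *
          (softmaxPolicy (θ + t • d) s b * softmaxScore (θ + t • d) d s b) := fun b => by
    conv_lhs => rw [← sub_add_cancel (d (s, b)) (∑ c, softmaxPolicy (θ + t • d) s c * d (s, c))]
    rw [softmaxScore]
    ring
  rw [sum_congr rfl fun b _ => hsplit b, sum_add_distrib, ← mul_sum,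
    sum_softmaxPolicy_mul_softmaxScore, mul_zero, add_zero, softmaxVar]

lemma hasDerivAt_softmaxPolicyDeriv_line (t : ℝ) (a : A) :
    HasDerivAt (fun u => softmaxPolicyDeriv (θ + u • d) d s a)
      (softmaxPolicyDeriv2 (θ + t • d) d s a) t := by
  refine ((hasDerivAt_softmaxPolicy_line θ d s t a).mul
    (hasDerivAt_softmaxScore_line θ d s t a)).congr_deriv ?_
  simp only [softmaxPolicyDeriv, softmaxPolicyDeriv2]
  ring

lemma softmaxVar_nonneg : 0 ≤ softmaxVar θ d s :=
  sum_nonneg fun a _ => mul_nonneg (softmaxPolicy_pos θ s a).le (sq_nonneg _)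

lemma abs_log_softmaxPolicy_line_le {t : ℝ} (ht : t ∈ Set.Icc (0 : ℝ) 1) (a : A) :
    |Real.log (softmaxPolicy (θ + t • d) s a)| ≤
      max |Real.log (softmaxPolicy θ s a)| |Real.log (softmaxPolicy (θ + d) s a)| := by
  have hconc : ConcaveOn ℝ (Set.Icc (0 : ℝ) 1) fun u => Real.log (softmaxPolicy (θ + u • d) s a) :=
    concaveOn_of_hasDerivWithinAt2_nonpos (convex_Icc 0 1)
      (fun u _ => (hasDerivAt_log_softmaxPolicy_line θ d s u a).continuousAt.continuousWithinAt)
      (fun u _ => (hasDerivAt_log_softmaxPolicy_line θ d s u a).hasDerivWithinAt)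
      (fun u _ => (hasDerivAt_softmaxScore_line θ d s u a).hasDerivWithinAt)
      fun _ _ => neg_nonpos.2 (softmaxVar_nonneg _ _ _)
  have hmin := hconc.ge_on_segment (Set.left_mem_Icc.2 zero_le_one)
    (Set.right_mem_Icc.2 zero_le_one) (z := t) (by rwa [segment_eq_Icc zero_le_one])
  simp only [zero_smul, add_zero, one_smul] at hmin
  have hneg : ∀ η : S × A → ℝ, Real.log (softmaxPolicy η s a) ≤ 0 := fun η =>
    Real.log_nonpos (softmaxPolicy_pos η s a).le (softmaxPolicy_le_one η s a)
  rw [abs_of_nonpos (hneg _), abs_of_nonpos (hneg _), abs_of_nonpos (hneg _), max_neg_neg]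
  exact neg_le_neg hmin

variable {θ d s} {b : ℝ} (hd : ∀ q, |d q| ≤ b)
include hd

lemma abs_softmaxScore_le (a : A) : |softmaxScore θ d s a| ≤ 2 * b := by
  have := abs_sum_mul_le_of_mem_stdSimplex (softmaxPolicy_mem_stdSimplex θ s) fun c => hd (s, c)
  rw [softmaxScore, two_mul]
  exact (abs_sub _ _).trans (add_le_add (hd (s, a)) this)

lemma sum_abs_softmaxPolicyDeriv_le : ∑ a, |softmaxPolicyDeriv θ d s a| ≤ 2 * b :=
  sum_abs_mul_le_of_mem_stdSimplex (softmaxPolicy_mem_stdSimplex θ s) (abs_softmaxScore_le hd)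

lemma softmaxVar_le_sq : softmaxVar θ d s ≤ b ^ 2 := by
  have hπ := softmaxPolicy_mem_stdSimplex θ s
  have hsq : ∑ a, softmaxPolicy θ s a * d (s, a) ^ 2 ≤ b ^ 2 :=
    (le_abs_self _).trans <| abs_sum_mul_le_of_mem_stdSimplex hπ fun a => by
      rw [abs_pow]
      exact pow_le_pow_left₀ (abs_nonneg _) (hd (s, a)) 2
  have := sum_mul_sq_sub_mean (f := fun a => d (s, a)) hπ.2
  simp only [softmaxVar, softmaxScore] at this ⊢
  nlinarith

lemma sum_abs_softmaxPolicyDeriv2_le : ∑ a, |softmaxPolicyDeriv2 θ d s a| ≤ 2 * b ^ 2 := by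
  have hπ := softmaxPolicy_mem_stdSimplex θ s
  calc ∑ a, |softmaxPolicyDeriv2 θ d s a|
      ≤ ∑ a, (softmaxPolicy θ s a * softmaxScore θ d s a ^ 2 +
          softmaxPolicy θ s a * softmaxVar θ d s) := sum_le_sum fun a _ => by
        rw [softmaxPolicyDeriv2, abs_mul, abs_of_nonneg (hπ.1 a), ← mul_add]
        refine mul_le_mul_of_nonneg_left ((abs_sub _ _).trans_eq ?_) (hπ.1 a)
        rw [abs_of_nonneg (sq_nonneg _), abs_of_nonneg (softmaxVar_nonneg _ _ _)]
    _ = 2 * softmaxVar θ d s := by rw [sum_add_distrib, ← sum_mul, hπ.2, softmaxVar]; ring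
    _ ≤ 2 * b ^ 2 := by linarith [softmaxVar_le_sq (θ := θ) (s := s) hd]

end Softmax

section RegRewardLine

variable {S A : Type*} [Fintype A] [Nonempty A]

noncomputable def regRewardDeriv (r : S → A → ℝ) (lam : ℝ) (πref : S → A → ℝ)
    (θ d : S × A → ℝ) (s : S) : ℝ :=
  ∑ a, softmaxPolicyDeriv θ d s a * r s a + lam * ∑ a, πref s a * softmaxScore θ d s a

variable {r : S → A → ℝ} {lam : ℝ} {πref : S → A → ℝ}

lemma hasDerivAt_regReward_line (hπref : ∀ s a, 0 < πref s a) (θ d : S × A → ℝ) (t : ℝ)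
    (s : S) :
    HasDerivAt (fun u => regReward r lam (fun x => -Real.log x) πref (softmaxPolicy (θ + u • d)) s)
      (regRewardDeriv r lam πref (θ + t • d) d s) t := by
  have hfun :
      (fun u : ℝ => regReward r lam (fun x => -Real.log x) πref (softmaxPolicy (θ + u • d)) s) =
      fun u : ℝ => ∑ a, softmaxPolicy (θ + u • d) s a * r s a -
        lam * ∑ a, πref s a * (Real.log (πref s a) - Real.log (softmaxPolicy (θ + u • d) s a)) :=
    funext fun u => by rw [regReward, fDiv_neg_log_eq (softmaxPolicy_pos _ s) (hπref s)]
  rw [hfun]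
  refine ((HasDerivAt.fun_sum fun a _ => (hasDerivAt_softmaxPolicy_line θ d s t a).mul_const
    (r s a)).fun_sub ((HasDerivAt.fun_sum fun a _ => ((hasDerivAt_log_softmaxPolicy_line θ d s t
      a).const_sub (Real.log (πref s a))).const_mul (πref s a)).const_mul lam)).congr_deriv ?_
  simp only [regRewardDeriv, mul_neg, sum_neg_distrib]
  ring

lemma hasDerivAt_regRewardDeriv_line (hπref : ∀ s, ∑ a, πref s a = 1) (θ d : S × A → ℝ) (t : ℝ)
    (s : S) :
    HasDerivAt (fun u => regRewardDeriv r lam πref (θ + u • d) d s)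
      (∑ a, softmaxPolicyDeriv2 (θ + t • d) d s a * r s a -
        lam * softmaxVar (θ + t • d) d s) t := by
  refine ((HasDerivAt.fun_sum fun a _ => (hasDerivAt_softmaxPolicyDeriv_line θ d s t a).mul_const
    (r s a)).fun_add ((HasDerivAt.fun_sum fun a _ => (hasDerivAt_softmaxScore_line θ d s t
      a).const_mul (πref s a)).const_mul lam)).congr_deriv ?_
  simp only [mul_neg, sum_neg_distrib, ← sum_mul, hπref s, one_mul]
  ring

end RegRewardLine

lemma abs_log_softmaxPolicy_le_iSup {S A : Type*} [Fintype S] [Fintype A] (θ : S × A → ℝ) (s : S)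
    (a : A) :
    |Real.log (softmaxPolicy θ s a)| ≤ ⨆ q : S × A, |Real.log (softmaxPolicy θ q.1 q.2)| :=
  le_ciSup (f := fun q : S × A => |Real.log (softmaxPolicy θ q.1 q.2)|)
    (Set.finite_range _).bddAbove (s, a)

lemma one_le_iSup_abs_log_softmaxPolicy {S A : Type*} [Fintype S] [Fintype A] [Nonempty S]
    (hA : 3 ≤ Fintype.card A) (θ : S × A → ℝ) :
    1 ≤ ⨆ q : S × A, |Real.log (softmaxPolicy θ q.1 q.2)| := by
  have : Nonempty A := Fintype.card_pos_iff.mp (by omega)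
  obtain ⟨s⟩ := ‹Nonempty S›
  obtain ⟨a, -, ha⟩ := exists_le_of_sum_le univ_nonempty (f := softmaxPolicy θ s)
    (g := fun _ => 3⁻¹) (by
      rw [(softmaxPolicy_mem_stdSimplex θ s).2, sum_const, card_univ, nsmul_eq_mul]
      have : (3 : ℝ) ≤ Fintype.card A := by exact_mod_cast hA
      linarith)
  have hpos := softmaxPolicy_pos θ s a
  have hlog : 1 < Real.log 3 := by
    rw [Real.lt_log_iff_exp_lt (by norm_num)]
    exact Real.exp_one_lt_three
  have : Real.log 3 ≤ -Real.log (softmaxPolicy θ s a) := by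
    rw [← Real.log_inv]
    exact Real.log_le_log (by norm_num) ((le_inv_comm₀ hpos (by norm_num)).mp ha)
  calc (1 : ℝ) ≤ |Real.log (softmaxPolicy θ s a)| := by
        linarith [neg_le_abs (Real.log (softmaxPolicy θ s a))]
    _ ≤ _ := abs_log_softmaxPolicy_le_iSup θ s a

section ValueFunction

variable {S A : Type*} [Fintype S] [Fintype A] [Nonempty A] {P : S → A → S → ℝ}
  {r : S → A → ℝ} {γ lam : ℝ} {πref : S → A → ℝ}

lemma contDiff_of_isRegValue {E : Type*} [NormedAddCommGroup E] [NormedSpace ℝ E]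
    {n : WithTop ℕ∞} (hP : ∀ s a, P s a ∈ stdSimplex ℝ S) (hγ0 : 0 ≤ γ) (hγ1 : γ < 1)
    (hπref : ∀ s a, 0 < πref s a) {θ : E → S × A → ℝ} (hθ : ∀ q, ContDiff ℝ n fun x => θ x q)
    {V : E → S → ℝ}
    (hV : ∀ x, IsRegValue P r γ lam (fun x => -Real.log x) πref (softmaxPolicy (θ x)) (V x))
    (s : S) : ContDiff ℝ n fun x => V x s := by
  classical
  have hπ := softmaxPolicy_mem_stdSimplex (S := S) (A := A)
  have hM : ∀ i j, ContDiff ℝ n fun x => (1 - γ • transitionMatrix P (softmaxPolicy (θ x))) i j :=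
    fun i j => contDiff_const.sub <| contDiff_const.mul <|
      ContDiff.sum fun a _ => (contDiff_softmaxPolicy hθ i a).mul contDiff_const
  have hc : ∀ i, ContDiff ℝ n fun x =>
      regReward r lam (fun x => -Real.log x) πref (softmaxPolicy (θ x)) i := fun i =>
    (ContDiff.sum fun a _ => (contDiff_softmaxPolicy hθ i a).mul contDiff_const).sub <|
      contDiff_const.mul <| ContDiff.sum fun a _ => contDiff_const.mul <|
        (((contDiff_softmaxPolicy hθ i a).div_const _).log
          fun x => (div_pos (softmaxPolicy_pos _ i a) (hπref i a)).ne').neg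
  simp only [fun x => (hV x).eq_inv_mulVec hP (hπ (θ x)) hγ0 hγ1, Matrix.mulVec, dotProduct]
  exact ContDiff.sum fun j _ => (contDiff_inv_apply hM
    (fun x => (isUnit_det_one_sub_smul_transitionMatrix hP (hπ (θ x)) hγ0 hγ1).ne_zero) s j).mul
      (hc j)

section Line

variable {θ d : S × A → ℝ} {x x₁ x₂ : ℝ → S → ℝ}

lemma deriv_value_line_eq (hπref : ∀ s a, 0 < πref s a)
    (hx : ∀ t, IsRegValue P r γ lam (fun x => -Real.log x) πref (softmaxPolicy (θ + t • d)) (x t))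
    (hx₁ : ∀ t s, HasDerivAt (fun u => x u s) (x₁ t s) t) (t : ℝ) (s : S) :
    x₁ t s = γ * expectNext P (softmaxPolicy (θ + t • d)) (x₁ t) s +
      (γ * expectNext P (softmaxPolicyDeriv (θ + t • d) d) (x t) s +
        regRewardDeriv r lam πref (θ + t • d) d s) :=
  eq_mul_expectNext_add_of_hasDerivAt (fun u => isRegValue_iff.mp (hx u)) (hx₁ t)
    (hasDerivAt_softmaxPolicy_line θ d · t ·) (hasDerivAt_regReward_line hπref θ d t) s

lemma deriv2_value_line_eq (hπref : IsPolicy πref)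
    (hx : ∀ t, IsRegValue P r γ lam (fun x => -Real.log x) πref (softmaxPolicy (θ + t • d)) (x t))
    (hx₁ : ∀ t s, HasDerivAt (fun u => x u s) (x₁ t s) t)
    (hx₂ : ∀ t s, HasDerivAt (fun u => x₁ u s) (x₂ t s) t) (t : ℝ) (s : S) :
    x₂ t s = γ * expectNext P (softmaxPolicy (θ + t • d)) (x₂ t) s +
      (γ * expectNext P (softmaxPolicyDeriv (θ + t • d) d) (x₁ t) s +
        (γ * (expectNext P (softmaxPolicyDeriv2 (θ + t • d) d) (x t) s +
            expectNext P (softmaxPolicyDeriv (θ + t • d) d) (x₁ t) s) +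
          (∑ a, softmaxPolicyDeriv2 (θ + t • d) d s a * r s a -
            lam * softmaxVar (θ + t • d) d s))) :=
  eq_mul_expectNext_add_of_hasDerivAt (deriv_value_line_eq hπref.1 hx hx₁) (hx₂ t)
    (hasDerivAt_softmaxPolicy_line θ d · t ·)
    (fun s => ((hasDerivAt_expectNext (hasDerivAt_softmaxPolicyDeriv_line θ d · t ·) (hx₁ t)
      s).const_mul γ).add (hasDerivAt_regRewardDeriv_line hπref.2 θ d t s)) s

variable (hP : ∀ s a, P s a ∈ stdSimplex ℝ S) (hγ0 : 0 ≤ γ) (hγ1 : γ < 1) {rmax : ℝ}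
  (hr : ∀ s a, |r s a| ≤ rmax) (hlam : 0 ≤ lam) (hπref : IsPolicy πref)
  (hx : ∀ t, IsRegValue P r γ lam (fun x => -Real.log x) πref (softmaxPolicy (θ + t • d)) (x t))
  (hx₁ : ∀ t s, HasDerivAt (fun u => x u s) (x₁ t s) t)
  (hx₂ : ∀ t s, HasDerivAt (fun u => x₁ u s) (x₂ t s) t) {b : ℝ} (hd : ∀ q, |d q| ≤ b)
  {t X : ℝ} (hX : ∀ s, |x t s| ≤ X)
include hP hγ0 hγ1 hr hlam hπref hx hx₁ hd hX

lemma abs_deriv_value_line_le (s : S) : |x₁ t s| ≤ 2 * b * (rmax + lam + γ * X) / (1 - γ) := by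
  refine abs_le_of_eq_mul_expectNext_add hP (softmaxPolicy_mem_stdSimplex _) hγ0 hγ1
    (deriv_value_line_eq hπref.1 hx hx₁ t) (fun s => ?_) s
  have hw := sum_abs_softmaxPolicyDeriv_le (θ := θ + t • d) (s := s) hd
  have hE := (abs_expectNext_le hP _ hX s).trans
    (mul_le_mul_of_nonneg_right hw ((abs_nonneg _).trans (hX s)))
  have hR := (abs_sum_mul_le_of_abs_le (w := softmaxPolicyDeriv (θ + t • d) d s) (hr s)).trans
    (mul_le_mul_of_nonneg_right hw ((abs_nonneg _).trans (hr s (Classical.arbitrary A))))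
  have hK := abs_sum_mul_le_of_mem_stdSimplex (hπref.mem_stdSimplex s)
    (abs_softmaxScore_le (θ := θ + t • d) (s := s) hd)
  rw [regRewardDeriv]
  rw [abs_le] at hE hR hK ⊢
  constructor <;> nlinarith

include hx₂ in
lemma abs_deriv2_value_line_le {Y : ℝ} (hY : ∀ s, |x₁ t s| ≤ Y) (s : S) :
    |x₂ t s| ≤ (b ^ 2 * (2 * rmax + lam + 2 * γ * X) + 4 * γ * b * Y) / (1 - γ) := by
  refine abs_le_of_eq_mul_expectNext_add hP (softmaxPolicy_mem_stdSimplex _) hγ0 hγ1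
    (deriv2_value_line_eq hπref hx hx₁ hx₂ t) (fun s => ?_) s
  have hw := sum_abs_softmaxPolicyDeriv_le (θ := θ + t • d) (s := s) hd
  have hw₂ := sum_abs_softmaxPolicyDeriv2_le (θ := θ + t • d) (s := s) hd
  have hE₁ := (abs_expectNext_le hP _ hY s).trans
    (mul_le_mul_of_nonneg_right hw ((abs_nonneg _).trans (hY s)))
  have hE₂ := (abs_expectNext_le hP _ hX s).trans
    (mul_le_mul_of_nonneg_right hw₂ ((abs_nonneg _).trans (hX s)))
  have hR := (abs_sum_mul_le_of_abs_le (w := softmaxPolicyDeriv2 (θ + t • d) d s) (hr s)).trans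
    (mul_le_mul_of_nonneg_right hw₂ ((abs_nonneg _).trans (hr s (Classical.arbitrary A))))
  have hν := softmaxVar_le_sq (θ := θ + t • d) (s := s) hd
  have hν₀ := softmaxVar_nonneg (θ + t • d) d s
  rw [abs_le] at hE₁ hE₂ hR ⊢
  constructor <;> nlinarith

end Line

end ValueFunction

-- The left side is the bound of `abs_deriv2_value_line_le` for the `X` of `IsRegValue.abs_le` and
-- the `Y` of `abs_deriv_value_line_le`; `1 ≤ m` lets `lam * m` absorb the bare `lam` terms.
lemma smoothness_constant_le {γ rmax lam m b : ℝ} (hγ0 : 0 ≤ γ) (hγ1 : γ < 1) (hrmax : 0 ≤ rmax)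
    (hlam : 0 ≤ lam) (hm : 1 ≤ m) :
    (b ^ 2 * (2 * rmax + lam + 2 * γ * ((rmax + lam * m) / (1 - γ))) +
        4 * γ * b * (2 * b * (rmax + lam + γ * ((rmax + lam * m) / (1 - γ))) / (1 - γ))) /
        (1 - γ) ≤ 8 * (rmax + lam * m) / (1 - γ) ^ 3 * b ^ 2 := by
  have hδ : 0 < 1 - γ := by linarith
  have key : (b ^ 2 * (2 * rmax + lam + 2 * γ * ((rmax + lam * m) / (1 - γ))) +
        4 * γ * b * (2 * b * (rmax + lam + γ * ((rmax + lam * m) / (1 - γ))) / (1 - γ))) /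
        (1 - γ) = b ^ 2 * ((2 * rmax + lam) * (1 - γ) ^ 2 + 2 * γ * (rmax + lam * m) * (1 - γ) +
          8 * γ * (rmax + lam) * (1 - γ) + 8 * γ ^ 2 * (rmax + lam * m)) / (1 - γ) ^ 3 := by
    field_simp
    ring
  rw [key, div_mul_eq_mul_div, div_le_div_iff_of_pos_right (pow_pos hδ 3)]
  have hlm : lam ≤ lam * m := le_mul_of_one_le_right hlam hm
  have : (2 * rmax + lam) * (1 - γ) ^ 2 + 2 * γ * (rmax + lam * m) * (1 - γ) +
      8 * γ * (rmax + lam) * (1 - γ) + 8 * γ ^ 2 * (rmax + lam * m) ≤ 8 * (rmax + lam * m) := by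
    nlinarith [mul_nonneg hγ0 hδ.le, mul_nonneg (mul_nonneg hγ0 hδ.le) (sub_nonneg.2 hlm)]
  nlinarith [sq_nonneg b]

theorem abs_value_line_sub_sub_deriv_le {S A : Type*} [Fintype S] [Fintype A] [Nonempty A]
    {P : S → A → S → ℝ} (hP : ∀ s a, P s a ∈ stdSimplex ℝ S) {r : S → A → ℝ} {rmax : ℝ}
    (hr : ∀ s a, |r s a| ≤ rmax) {γ : ℝ} (hγ0 : 0 ≤ γ) (hγ1 : γ < 1) {lam : ℝ} (hlam : 0 ≤ lam)
    {πref : S → A → ℝ} (hπref : IsPolicy πref) {θ d : S × A → ℝ} {x : ℝ → S → ℝ}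
    (hx : ∀ t, IsRegValue P r γ lam (fun x => -Real.log x) πref (softmaxPolicy (θ + t • d)) (x t))
    {m : ℝ} (hm1 : 1 ≤ m)
    (hm : ∀ s a, |Real.log (softmaxPolicy θ s a)| ≤ m ∧ |Real.log (softmaxPolicy (θ + d) s a)| ≤ m)
    {b : ℝ} (hd : ∀ q, |d q| ≤ b) (s : S) :
    |x 1 s - x 0 s - deriv (fun t => x t s) 0| ≤
      8 * (rmax + lam * m) / (1 - γ) ^ 3 / 2 * b ^ 2 := by
  have hsmooth : ∀ s, ContDiff ℝ ∞ fun t => x t s :=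
    contDiff_of_isRegValue hP hγ0 hγ1 hπref.1 (θ := fun t => θ + t • d) (fun q => by
      simp only [Pi.add_apply, Pi.smul_apply, smul_eq_mul]; fun_prop) hx
  have hx₁ : ∀ t s, HasDerivAt (fun u => x u s) (deriv (fun u => x u s) t) t := fun t s =>
    ((hsmooth s).differentiable (by simp) t).hasDerivAt
  have hx₂ : ∀ t s, HasDerivAt (fun u => deriv (fun v => x v s) u)
      (deriv (fun u => deriv (fun v => x v s) u) t) t := fun t s =>
    ((contDiff_infty_iff_deriv.mp (hsmooth s)).2.differentiable (by simp) t).hasDerivAt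
  have hrmax : 0 ≤ rmax := (abs_nonneg _).trans (hr s (Classical.arbitrary A))
  have hbound : ∀ t ∈ Set.Icc (0 : ℝ) 1, |deriv (fun u => deriv (fun v => x v s) u) t| ≤
      8 * (rmax + lam * m) / (1 - γ) ^ 3 * b ^ 2 := fun t ht => by
    have hX := IsRegValue.abs_le hP hγ0 hγ1 hr hlam hπref (isPolicy_softmaxPolicy _)
      (fun s a => (abs_log_softmaxPolicy_line_le θ d s ht a).trans (max_le (hm s a).1 (hm s a).2))
      (hx t)
    have hY := abs_deriv_value_line_le hP hγ0 hγ1 hr hlam hπref hx hx₁ hd hX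
    exact (abs_deriv2_value_line_le hP hγ0 hγ1 hr hlam hπref hx hx₁ hx₂ hd hX hY s).trans
      (smoothness_constant_le hγ0 hγ1 hrmax hlam hm1)
  rw [div_mul_eq_mul_div]
  exact abs_sub_sub_deriv_le_of_abs_deriv2_le (hx₁ · s) (hx₂ · s) hbound

/-- (Forward KL smoothness) Assume `|A| ≥ 3`. For any distribution `ρ`
on `S` and any `θ, θ'`, the forward-KL-regularized value function (generator
`f(x) = −log x`) satisfies
`|Ṽ_λ^{π_{θ'}}(ρ) − Ṽ_λ^{π_θ}(ρ) − ⟨∇_θ Ṽ_λ^{π_θ}(ρ), θ' − θ⟩| ≤ (L_F(θ,θ')/2)‖θ' − θ‖₂²`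
with `L_F(θ,θ') = 8(r_max + λ max{max_{s,a}|log π_θ(a|s)|, max_{s,a}|log π_{θ'}(a|s)|})/(1−γ)³`. -/
theorem forward_kl_smoothness
    {S A : Type*} [Fintype S] [Fintype A] [Nonempty S] [Nonempty A]
    (hA : 3 ≤ Fintype.card A)
    (P : S → A → S → ℝ) (hP : ∀ s a, (∀ s', 0 ≤ P s a s') ∧ ∑ s' : S, P s a s' = 1)
    (r : S → A → ℝ) (rmax : ℝ) (hr : ∀ s a, 0 ≤ r s a ∧ r s a ≤ rmax)
    (γ : ℝ) (hγ0 : 0 ≤ γ) (hγ1 : γ < 1)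
    (πref : S → A → ℝ) (hπref : IsPolicy πref)
    (lam : ℝ) (hlam : 0 < lam)
    (ρ : S → ℝ) (hρ : (∀ s, 0 ≤ ρ s) ∧ ∑ s : S, ρ s = 1)
    (V : EuclideanSpace ℝ (S × A) → S → ℝ)
    (hV : ∀ θ, IsRegValue P r γ lam (fun x => -Real.log x) πref (softmaxPolicy θ) (V (WithLp.toLp 2 θ)))
    (θ θ' : EuclideanSpace ℝ (S × A)) :
    |(∑ s : S, ρ s * V θ' s) - (∑ s : S, ρ s * V θ s) -
        ⟪gradient (fun η : EuclideanSpace ℝ (S × A) => ∑ s : S, ρ s * V η s) θ,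
          θ' - θ⟫| ≤
      (8 * (rmax + lam *
          max (⨆ q : S × A, |Real.log (softmaxPolicy θ q.1 q.2)|)
            (⨆ q : S × A, |Real.log (softmaxPolicy θ' q.1 q.2)|)) /
        (1 - γ) ^ 3) / 2 * ‖θ' - θ‖ ^ 2 := by
  have hVη : ∀ η : EuclideanSpace ℝ (S × A),
      IsRegValue P r γ lam (fun x => -Real.log x) πref (softmaxPolicy η) (V η) := fun η => hV η
  have hVs : ∀ s, ContDiff ℝ ∞ fun η => V η s :=
    contDiff_of_isRegValue hP hγ0 hγ1 hπref.1 (θ := fun η => η.ofLp) (fun q => by fun_prop) hVη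
  have hTaylor := abs_value_line_sub_sub_deriv_le hP
    (fun s a => abs_le.2 ⟨by linarith [hr s a], (hr s a).2⟩) hγ0 hγ1 hlam.le hπref
    (x := fun t => V (θ + t • (θ' - θ))) (fun t => by simpa using hVη (θ + t • (θ' - θ)))
    ((one_le_iSup_abs_log_softmaxPolicy hA θ).trans (le_max_left _ _))
    (fun s a => ⟨(abs_log_softmaxPolicy_le_iSup θ s a).trans (le_max_left _ _),
      by simpa using (abs_log_softmaxPolicy_le_iSup θ' s a).trans (le_max_right _ _)⟩)
    (fun q => by simpa using PiLp.norm_apply_le (θ' - θ) q)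
  simp only [one_smul, zero_smul, add_zero, add_sub_cancel] at hTaylor
  rw [inner_gradient_sum_mul_eq (fun s => (hVs s).differentiable (by simp)), ← sum_sub_distrib,
    ← sum_sub_distrib]
  simp_rw [← mul_sub]
  exact abs_sum_mul_le_of_mem_stdSimplex hρ hTaylor
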